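/- arXiv:2001.10831 — 7 statements merged into one kernel-verified Lean document; each statement's English description precedes it below -/
import Mathlib

section
/- Let f ∈ C²(ℝ^N, ℝ), β ∈ ℝ and α > 1. Suppose x : (0,∞) → ℝ^N is twice differentiable and satisfies, for all t > 0, x″(t) + (α/t) x′(t) + β ∇²f(x(t))·x′(t) = −(1 + β/t) ∇f(x(t)). Define v(t) := x(t) + (t/(α−1))(x′(t) + β ∇f(x(t))). Then for all t > 0, the pair (x, v) satisfies the first-order system x′(t) = ((α−1)/t)(v(t) − x(t)) − β ∇f(x(t)) and v′(t) = −(t/(α−1)) ∇f(x(t)). -/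
/-! Writing `w := x' + β • ∇f ∘ x`, the chain rule gives `w' = x'' + β • ∇²f(x) x'`, so the
damped equation says exactly `w' + (α/t) • x' = -(1 + β/t) • ∇f(x)`. Differentiating
`v = x + (t/(α-1)) • w` and substituting this, the `x'` terms cancel because `1 + 1/(α-1) = α/(α-1)`,
and the `β • ∇f(x)` terms cancel as well, leaving `v' = -(t/(α-1)) • ∇f(x)`. -/

section

variable {E : Type*} [NormedAddCommGroup E] [NormedSpace ℝ E]

theorem eq_div_smul_sub_sub_smul_of_eq_add_div_smul {c t β : ℝ} (hc : c ≠ 0) (ht : t ≠ 0)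
    {x v x' g : E} (hv : v = x + (t / c) • (x' + β • g)) :
    x' = (c / t) • (v - x) - β • g := by
  rw [hv]
  match_scalars <;> field_simp <;> ring

theorem HasDerivAt.add_smul_comp_gradient {f' : E → E} {f'' : E →L[ℝ] E} {x x' : ℝ → E}
    {x'' : E} {t β : ℝ} (hf'' : HasFDerivAt f' f'' (x t)) (hx : HasDerivAt x (x' t) t)
    (hx' : HasDerivAt x' x'' t) :
    HasDerivAt (fun s => x' s + β • f' (x s)) (x'' + β • f'' (x' t)) t :=
  hx'.add ((hf''.comp_hasDerivAt t hx).const_smul β)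

theorem HasDerivAt.add_div_smul_of_damped {x w : ℝ → E} {x' w' g : E} {α β t : ℝ}
    (hα : α ≠ 1) (ht : t ≠ 0) (hx : HasDerivAt x x' t) (hw : HasDerivAt w w' t)
    (hwt : w t = x' + β • g) (hdamp : w' + (α / t) • x' = -(1 + β / t) • g) :
    HasDerivAt (fun s => x s + (s / (α - 1)) • w s) (-(t / (α - 1)) • g) t := by
  have hα1 : α - 1 ≠ 0 := sub_ne_zero.mpr hα
  have hdiv : HasDerivAt (fun s : ℝ => s / (α - 1)) (1 / (α - 1)) t := by
    simpa using (hasDerivAt_id t).div_const (α - 1)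
  have hw' : w' = -(1 + β / t) • g - (α / t) • x' := eq_sub_of_add_eq hdamp
  refine (hx.add (hdiv.smul hw)).congr_deriv ?_
  rw [hwt, hw']
  match_scalars <;> field_simp <;> ring

end

theorem hessian_damping_implies_first_order_system_general
    {N : ℕ}
    (f' : EuclideanSpace ℝ (Fin N) → EuclideanSpace ℝ (Fin N))
    (f'' : EuclideanSpace ℝ (Fin N) →
      (EuclideanSpace ℝ (Fin N) →L[ℝ] EuclideanSpace ℝ (Fin N)))
    (hf'' : ∀ p, HasFDerivAt f' (f'' p) p)
    (β α : ℝ) (hα : 1 < α)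
    (x x' x'' : ℝ → EuclideanSpace ℝ (Fin N))
    (hx : ∀ t : ℝ, 0 < t → HasDerivAt x (x' t) t)
    (hx' : ∀ t : ℝ, 0 < t → HasDerivAt x' (x'' t) t)
    (heq : ∀ t : ℝ, 0 < t →
      x'' t + (α / t) • x' t + β • (f'' (x t)) (x' t) = -(1 + β / t) • f' (x t))
    (v : ℝ → EuclideanSpace ℝ (Fin N))
    (hv : ∀ t : ℝ, v t = x t + (t / (α - 1)) • (x' t + β • f' (x t))) :
    ∀ t : ℝ, 0 < t →
      x' t = ((α - 1) / t) • (v t - x t) - β • f' (x t) ∧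
      HasDerivAt v (-(t / (α - 1)) • f' (x t)) t := by
  intro t ht
  refine ⟨eq_div_smul_sub_sub_smul_of_eq_add_div_smul (by linarith) ht.ne' (hv t), ?_⟩
  have hw := (hx t ht).add_smul_comp_gradient (β := β) (hf'' (x t)) (hx' t ht)
  have hdamp : x'' t + β • f'' (x t) (x' t) + (α / t) • x' t = -(1 + β / t) • f' (x t) := by
    rw [← heq t ht]
    abel
  rw [funext hv]
  exact (hx t ht).add_div_smul_of_damped hα.ne' ht.ne' hw rfl hdamp

/-- If `x` is twice differentiable on `(0,∞)` and solves the
Hessian-driven damping equation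
`x″(t) + (α/t) x′(t) + β ∇²f(x(t))·x′(t) = −(1 + β/t) ∇f(x(t))`, then with
`v(t) := x(t) + (t/(α−1))(x′(t) + β ∇f(x(t)))`, the pair `(x, v)` satisfies the
first-order system `x′(t) = ((α−1)/t)(v(t) − x(t)) − β ∇f(x(t))` and
`v′(t) = −(t/(α−1)) ∇f(x(t))` on `(0,∞)`. -/
theorem hessian_damping_implies_first_order_system
    {N : ℕ}
    (f : EuclideanSpace ℝ (Fin N) → ℝ)
    (f' : EuclideanSpace ℝ (Fin N) → EuclideanSpace ℝ (Fin N))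
    (f'' : EuclideanSpace ℝ (Fin N) →
      (EuclideanSpace ℝ (Fin N) →L[ℝ] EuclideanSpace ℝ (Fin N)))
    (hC2 : ContDiff ℝ 2 f)
    (hf' : ∀ p, HasGradientAt f (f' p) p)
    (hf'' : ∀ p, HasFDerivAt f' (f'' p) p)
    (β α : ℝ) (hα : 1 < α)
    (x x' x'' : ℝ → EuclideanSpace ℝ (Fin N))
    (hx : ∀ t : ℝ, 0 < t → HasDerivAt x (x' t) t)
    (hx' : ∀ t : ℝ, 0 < t → HasDerivAt x' (x'' t) t)
    (heq : ∀ t : ℝ, 0 < t →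
      x'' t + (α / t) • x' t + β • (f'' (x t)) (x' t) = -(1 + β / t) • f' (x t))
    (v : ℝ → EuclideanSpace ℝ (Fin N))
    (hv : ∀ t : ℝ, v t = x t + (t / (α - 1)) • (x' t + β • f' (x t))) :
    ∀ t : ℝ, 0 < t →
      x' t = ((α - 1) / t) • (v t - x t) - β • f' (x t) ∧
      HasDerivAt v (-(t / (α - 1)) • f' (x t)) t :=
  hessian_damping_implies_first_order_system_general f' f'' hf'' β α hα x x' x'' hx hx' heq v hv
end

section
/- Let f : ℝ^N → ℝ be Fréchet differentiable, α > 1, h > 0, and let (t_n) be a sequence of positive reals. Suppose sequences (x_n), (v_n), (y_n) in ℝ^N satisfy for every n: y_n = x_n + (h(α−1)/t_n)(v_n − x_n), x_{n+1} = x_n + (h(α−1)/t_n)(v_n − x_n) − h² ∇f(y_n), and v_{n+1} = v_n − (h t_n/(α−1)) ∇f(y_n). Then for every n: (a) v_{n+1} = x_n + (t_n/(h(α−1)))(x_{n+1} − x_n); (b) y_{n+1} = x_{n+1} + α_{n+1}(x_{n+1} − x_n) with inertial coefficient α_{n+1} := (t_n − h(α−1))/t_{n+1}; and (c) x_{n+2}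 = y_{n+1} − h² ∇f(y_{n+1}). In particular, the choice t_n = h(n+α) gives α_{n+1} = (n+1)/((n+1)+α), and the choice t_n = hn gives α_{n+1} = ((n+1)−α)/(n+1), so the scheme coincides with Nesterov's accelerated gradient method (AGM2). -/
/-- equivalence of the NaG velocity formulation with Nesterov's
accelerated gradient method (AGM2). -/
theorem nag_velocity_form_equiv_agm2
    {N : ℕ}
    (f : EuclideanSpace ℝ (Fin N) → ℝ)
    (f' : EuclideanSpace ℝ (Fin N) → EuclideanSpace ℝ (Fin N))
    (hf' : ∀ p, HasGradientAt f (f' p) p)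
    (α h : ℝ) (hα : 1 < α) (hh : 0 < h)
    (t : ℕ → ℝ) (ht : ∀ n, 0 < t n)
    (x v y : ℕ → EuclideanSpace ℝ (Fin N))
    (hy : ∀ n : ℕ, y n = x n + (h * (α - 1) / t n) • (v n - x n))
    (hx : ∀ n : ℕ, x (n + 1)
      = x n + (h * (α - 1) / t n) • (v n - x n) - h ^ 2 • f' (y n))
    (hv : ∀ n : ℕ, v (n + 1) = v n - (h * t n / (α - 1)) • f' (y n)) :
    (∀ n : ℕ, v (n + 1) = x n + (t n / (h * (α - 1))) • (x (n + 1) - x n)) ∧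
    (∀ n : ℕ, y (n + 1)
      = x (n + 1) + ((t n - h * (α - 1)) / t (n + 1)) • (x (n + 1) - x n)) ∧
    (∀ n : ℕ, x (n + 2) = y (n + 1) - h ^ 2 • f' (y (n + 1))) ∧
    ((∀ n : ℕ, t n = h * ((n : ℝ) + α)) →
      ∀ n : ℕ, (t n - h * (α - 1)) / t (n + 1)
        = ((n : ℝ) + 1) / (((n : ℝ) + 1) + α)) ∧
    ((∀ n : ℕ, t n = h * (n : ℝ)) →
      ∀ n : ℕ, (t n - h * (α - 1)) / t (n + 1)
        = (((n : ℝ) + 1) - α) / ((n : ℝ) + 1)) := by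

  have hne : ∀ n, t n ≠ 0 := fun n => (ht n).ne'
  have hh0 : h ≠ 0 := hh.ne'
  have ha0 : α - 1 ≠ 0 := sub_ne_zero.mpr hα.ne'
  refine ⟨?_, ?_, ?_, ?_, ?_⟩
  · intro n
    rw [hv n, hx n]
    match_scalars <;> field_simp [hne n, hne (n+1)] <;> ring
  · intro n
    rw [hy (n+1), hv n, hx n]
    match_scalars <;> field_simp [hne n, hne (n+1)] <;> ring
  · intro n
    rw [hx (n+1), hy (n+1)]
  · intro hth n
    rw [hth n, hth (n+1)]
    push_cast
    have : ((n:ℝ) + 1 + α) ≠ 0 := by positivity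
    field_simp
    ring
  · intro hth n
    rw [hth n, hth (n+1)]
    push_cast
    have : ((n:ℝ) + 1) ≠ 0 := by positivity
    field_simp
    ring
end

section
/- (Extended descent lemma) Let f : ℝ^N → ℝ be convex and Fréchet differentiable with ∇f L-Lipschitz continuous, and let s ∈ (0, 1/L]. Then for all x, y ∈ ℝ^N: f(y − s∇f(y)) ≤ f(x) + ⟨∇f(y), y − x⟩ − (s/2)‖∇f(y)‖² − (s/2)‖∇f(x) − ∇f(y)‖². -/
/-!
Applied at `y` with step `s`, the descent lemma
`f b ≤ f a + ⟪∇f a, b - a⟫ + L/2 ‖b - a‖²` gives the sufficient decrease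
`f (y - s ∇f y) ≤ f y - s/2 ‖∇f y‖²`. Applied at `x` towards `z = x - (∇f x - ∇f y)/L` and
combined with the first-order convexity inequality at `y` towards the same `z`, it gives
`f y + ⟪∇f y, x - y⟫ + ‖∇f x - ∇f y‖²/(2L) ≤ f x`. Adding the two and using `s ≤ 1/L` gives
the claim.
-/

open scoped RealInnerProductSpace
open AffineMap Set

variable {E : Type*} [NormedAddCommGroup E] [InnerProductSpace ℝ E] [CompleteSpace E]
  {f : E → ℝ} {g : E} {a b : E}

theorem HasGradientAt.hasDerivAt_comp_lineMap {t : ℝ} (h : HasGradientAt f g (lineMap a b t)) :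
    HasDerivAt (f ∘ lineMap a b) ⟪g, b - a⟫ t := by
  simpa using h.hasFDerivAt.comp_hasDerivAt t hasDerivAt_lineMap

theorem ConvexOn.add_inner_le_of_hasGradientAt {s : Set E} (hf : ConvexOn ℝ s f) (ha : a ∈ s)
    (hb : b ∈ s) (hg : HasGradientAt f g a) : f a + ⟪g, b - a⟫ ≤ f b := by
  have hline : ConvexOn ℝ (lineMap a b ⁻¹' s) (f ∘ lineMap (k := ℝ) a b) := hf.comp_affineMap _
  have hderiv : HasDerivAt (f ∘ lineMap a b) ⟪g, b - a⟫ (0 : ℝ) :=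
    (by simpa using hg : HasGradientAt f g (lineMap a b (0 : ℝ))).hasDerivAt_comp_lineMap
  simpa [slope_def_field, le_sub_iff_add_le'] using
    hline.le_slope_of_hasDerivAt (by simpa using ha) (by simpa using hb) zero_lt_one hderiv

variable {f' : E → E} {L : ℝ}

theorem le_add_inner_add_of_lipschitz_gradient (hf : ∀ p, HasGradientAt f (f' p) p)
    (hLip : ∀ p q, ‖f' p - f' q‖ ≤ L * ‖p - q‖) (a b : E) :
    f b ≤ f a + ⟪f' a, b - a⟫ + L / 2 * ‖b - a‖ ^ 2 := by
  set c := ⟪f' a, b - a⟫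
  set n := ‖b - a‖ ^ 2
  have hderiv (t : ℝ) : HasDerivAt (fun t => f a + t * c + L / 2 * t ^ 2 * n - f (lineMap a b t))
      (c + L * t * n - ⟪f' (lineMap a b t), b - a⟫) t := by
    have hbound : HasDerivAt (fun t => f a + t * c + L / 2 * t ^ 2 * n) (c + L * t * n) t :=
      ((((hasDerivAt_id t).mul_const c).const_add (f a)).add
        (((hasDerivAt_pow 2 t).const_mul (L / 2)).mul_const n)).congr_deriv (by ring)
    exact hbound.sub (hf (lineMap a b t)).hasDerivAt_comp_lineMap
  have hslope {t : ℝ} (ht : 0 ≤ t) :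
      ⟪f' (lineMap a b t) - f' a, b - a⟫ ≤ L * t * ‖b - a‖ ^ 2 := calc
    _ ≤ ‖f' (lineMap a b t) - f' a‖ * ‖b - a‖ := real_inner_le_norm _ _
    _ ≤ L * ‖lineMap a b t - a‖ * ‖b - a‖ := by gcongr; exact hLip _ _
    _ = L * t * ‖b - a‖ ^ 2 := by
      rw [← dist_eq_norm, dist_lineMap_left, Real.norm_of_nonneg ht, dist_eq_norm']; ring
  have hmono :
      MonotoneOn (fun t => f a + t * c + L / 2 * t ^ 2 * n - f (lineMap a b t)) (Icc 0 1) := by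
    refine monotoneOn_of_hasDerivWithinAt_nonneg (convex_Icc 0 1)
      (fun t _ => (hderiv t).continuousAt.continuousWithinAt)
      (fun t _ => (hderiv t).hasDerivWithinAt) fun t ht => ?_
    rw [interior_Icc] at ht
    have := hslope ht.1.le
    rw [inner_sub_left] at this
    linarith
  simpa using hmono (left_mem_Icc.2 zero_le_one) (right_mem_Icc.2 zero_le_one) zero_le_one

theorem ConvexOn.add_inner_add_norm_sub_gradient_sq_le (hL : 0 < L) (hconv : ConvexOn ℝ univ f)
    (hf : ∀ p, HasGradientAt f (f' p) p) (hLip : ∀ p q, ‖f' p - f' q‖ ≤ L * ‖p - q‖) (x y : E) :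
    f y + ⟪f' y, x - y⟫ + 1 / (2 * L) * ‖f' x - f' y‖ ^ 2 ≤ f x := by
  set g := f' x - f' y
  set z := x - L⁻¹ • g
  have hx := le_add_inner_add_of_lipschitz_gradient hf hLip x z
  have hy := hconv.add_inner_le_of_hasGradientAt (mem_univ y) (mem_univ z) (hf y)
  have hg : ⟪f' x, g⟫ - ⟪f' y, g⟫ = ‖g‖ ^ 2 := by
    rw [← inner_sub_left, real_inner_self_eq_norm_sq]
  have hcoef :
      L⁻¹ * (⟪f' x, g⟫ - ⟪f' y, g⟫) - L / 2 * (L⁻¹ * ‖g‖) ^ 2 = 1 / (2 * L) * ‖g‖ ^ 2 := by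
    rw [hg]; field_simp; ring
  simp only [z, sub_sub_cancel_left, inner_neg_right, real_inner_smul_right, norm_neg, norm_smul,
    Real.norm_of_nonneg (inv_nonneg.2 hL.le)] at hx
  rw [sub_right_comm, inner_sub_right, real_inner_smul_right] at hy
  linarith

theorem image_sub_smul_gradient_le (hf : ∀ p, HasGradientAt f (f' p) p)
    (hLip : ∀ p q, ‖f' p - f' q‖ ≤ L * ‖p - q‖) {s : ℝ} (hs : 0 ≤ s) (hsL : s * L ≤ 1) (y : E) :
    f (y - s • f' y) ≤ f y - s / 2 * ‖f' y‖ ^ 2 := by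
  have hy := le_add_inner_add_of_lipschitz_gradient hf hLip y (y - s • f' y)
  simp only [sub_sub_cancel_left, inner_neg_right, real_inner_smul_right,
    real_inner_self_eq_norm_sq, norm_neg, norm_smul, Real.norm_of_nonneg hs] at hy
  nlinarith [mul_le_mul_of_nonneg_left hsL (mul_nonneg hs (sq_nonneg ‖f' y‖))]

/-- Extended descent lemma. -/
theorem extended_descent_lemma
    {N : ℕ}
    (f : EuclideanSpace ℝ (Fin N) → ℝ)
    (f' : EuclideanSpace ℝ (Fin N) → EuclideanSpace ℝ (Fin N))
    (L : ℝ) (hL : 0 < L)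
    (hconv : ConvexOn ℝ Set.univ f)
    (hdiff : ∀ p, HasGradientAt f (f' p) p)
    (hLip : ∀ p q, ‖f' p - f' q‖ ≤ L * ‖p - q‖)
    (s : ℝ) (hs : s ∈ Set.Ioc (0 : ℝ) (1 / L))
    (x y : EuclideanSpace ℝ (Fin N)) :
    f (y - s • f' y)
      ≤ f x + ⟪f' y, y - x⟫ - (s / 2) * ‖f' y‖ ^ 2
        - (s / 2) * ‖f' x - f' y‖ ^ 2 := by
  obtain ⟨hs0, hsL⟩ := hs
  have hdecrease := image_sub_smul_gradient_le hdiff hLip hs0.le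
    (by rwa [le_div_iff₀ hL] at hsL) y
  have hcoco := hconv.add_inner_add_norm_sub_gradient_sq_le hL hdiff hLip x y
  have hstep : s / 2 ≤ 1 / (2 * L) := by
    calc s / 2 ≤ 1 / L / 2 := by gcongr
      _ = 1 / (2 * L) := by ring
  have hinner : ⟪f' y, y - x⟫ = -⟪f' y, x - y⟫ := by rw [← inner_neg_right, neg_sub]
  linarith [mul_le_mul_of_nonneg_right hstep (sq_nonneg ‖f' x - f' y‖)]
end

section
/- Let the LT-S-IGAHD iterates (x_n), (y_n) be generated as in the stated setting, fix x* ∈ ℝ^N, and for n ≥ 1 set z_n := (x_{n−1} − x*) + t_n(x_n − x_{n−1}) + λ_n t_{n+1} ∇f(x_{n−1}) with t_n := (n−1)/(α−1). Then for every n ≥ 1: z_{n+1} − z_n = −s·t_{n+1}·∇f(y_n) + [γ_n t_{n+1} + λ_{n+1} t_{n+2} − λ_n t_{n+1} − ω_n t_{n+1}]·∇f(x_n). In particular, if γ_n = (λ_n + ω_n) − ((n+1)/n)·λ_{n+1}, then z_{n+1} − z_n = −s·t_{n+1}·∇f(y_n). -/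
/-- the increment of the auxiliary sequence `z_n` in the
Lyapunov analysis of LT-S-IGAHD. -/
theorem lt_s_igahd_z_increment
    {N : ℕ}
    (f : EuclideanSpace ℝ (Fin N) → ℝ)
    (f' : EuclideanSpace ℝ (Fin N) → EuclideanSpace ℝ (Fin N))
    (hdiff : ∀ p, HasGradientAt f (f' p) p)
    (α : ℝ) (hα : 3 ≤ α)
    (s : ℝ) (hs : 0 < s)
    (lam ω γ : ℕ → ℝ)
    (x y : ℕ → EuclideanSpace ℝ (Fin N))
    (hy : ∀ n : ℕ, 1 ≤ n →
      y n = x n + (((n : ℝ) - α) / (n : ℝ)) • (x n - x (n - 1))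
        - lam n • (f' (x n) - f' (x (n - 1))) - ω n • f' (x n))
    (hx : ∀ n : ℕ, 1 ≤ n →
      x (n + 1) = y n - s • f' (y n) + γ n • f' (x n))
    (xs : EuclideanSpace ℝ (Fin N))
    (t : ℕ → ℝ) (ht : ∀ n : ℕ, t n = ((n : ℝ) - 1) / (α - 1))
    (z : ℕ → EuclideanSpace ℝ (Fin N))
    (hz : ∀ n : ℕ, 1 ≤ n →
      z n = (x (n - 1) - xs) + t n • (x n - x (n - 1))
        + (lam n * t (n + 1)) • f' (x (n - 1))) :
    ∀ n : ℕ, 1 ≤ n →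
      (z (n + 1) - z n
        = -(s * t (n + 1)) • f' (y n)
          + (γ n * t (n + 1) + lam (n + 1) * t (n + 2)
              - lam n * t (n + 1) - ω n * t (n + 1)) • f' (x n)) ∧
      (γ n = (lam n + ω n) - (((n : ℝ) + 1) / (n : ℝ)) * lam (n + 1) →
        z (n + 1) - z n = -(s * t (n + 1)) • f' (y n)) := by
  intro n hn
  have hn0 : (n : ℝ) ≠ 0 := Nat.cast_ne_zero.mpr (by omega)
  have hα1 : α - 1 ≠ 0 := by linarith
  have h1 : z (n + 1) = (x n - xs) + t (n + 1) • (x (n + 1) - x n)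
      + (lam (n + 1) * t (n + 2)) • f' (x n) := by
    have h := hz (n + 1) (by omega)
    simpa using h
  have h2 := hz n hn
  have h3 := hx n hn
  have h4 := hy n hn
  have hcast1 : ((n + 1 : ℕ) : ℝ) = (n : ℝ) + 1 := by push_cast; ring
  have hcast2 : ((n + 2 : ℕ) : ℝ) = (n : ℝ) + 2 := by push_cast; ring
  have key : z (n + 1) - z n
      = -(s * t (n + 1)) • f' (y n)
        + (γ n * t (n + 1) + lam (n + 1) * t (n + 2)
            - lam n * t (n + 1) - ω n * t (n + 1)) • f' (x n) := by
    rw [h1, h2, h3, h4, ht n, ht (n + 1), ht (n + 2), hcast1, hcast2]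
    match_scalars <;> field_simp <;> (try ring) <;> tauto
  refine ⟨key, fun hγ => ?_⟩
  rw [key]
  have hc : γ n * t (n + 1) + lam (n + 1) * t (n + 2)
      - lam n * t (n + 1) - ω n * t (n + 1) = 0 := by
    rw [hγ, ht (n + 1), ht (n + 2), hcast1, hcast2]
    field_simp
    ring
  rw [hc, zero_smul, add_zero]
end

section
/- Let L > 0, s ∈ (0, 1/L], α > 1, and a, b, μ ≥ 0. Define N′ := (α−1)(s²L² + 1) + 2μL√(α−1) + (μ/s)² − a if b − a > 1/4, and N′ := max{ (1 − 2b + √(4(a−b)+1))/2, (α−1)(s²L² + 1) + 2μL√(α−1) + (μ/s)² − a } if b − a ≤ 1/4. Then for every natural number n ≥ 1 with n > N′, the coefficients γ_n := s·√((α−1)/(n+a)) and λ_{n+1} := s·n/(n+1) + μ·n/((n+1)(n+b)) satisfy the strict inequality [s(1 − γ_n L) − ((n+1)/n)·λ_{n+1}]² < s² − γ_n². -/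
/-- the coefficients of Example 24 satisfy assumption (i) of the
convergence theorem for LT-S-IGAHD for every `n > N′`. -/
theorem example24_assumption_i
    (L s α a b μ : ℝ) (hL : 0 < L) (hs : s ∈ Set.Ioc (0 : ℝ) (1 / L))
    (hα : 1 < α) (ha : 0 ≤ a) (hb : 0 ≤ b) (hμ : 0 ≤ μ)
    (N' : ℝ)
    (hN'₁ : b - a > 1 / 4 →
      N' = (α - 1) * (s ^ 2 * L ^ 2 + 1) + 2 * μ * L * Real.sqrt (α - 1)
        + (μ / s) ^ 2 - a)
    (hN'₂ : b - a ≤ 1 / 4 →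
      N' = max ((1 - 2 * b + Real.sqrt (4 * (a - b) + 1)) / 2)
        ((α - 1) * (s ^ 2 * L ^ 2 + 1) + 2 * μ * L * Real.sqrt (α - 1)
          + (μ / s) ^ 2 - a)) :
    ∀ n : ℕ, 1 ≤ n → N' < (n : ℝ) →
      (s * (1 - (s * Real.sqrt ((α - 1) / ((n : ℝ) + a))) * L)
        - (((n : ℝ) + 1) / (n : ℝ))
          * (s * (n : ℝ) / ((n : ℝ) + 1)
            + μ * (n : ℝ) / (((n : ℝ) + 1) * ((n : ℝ) + b)))) ^ 2
      < s ^ 2 - (s * Real.sqrt ((α - 1) / ((n : ℝ) + a))) ^ 2 := by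
  obtain ⟨hs0, hsL⟩ := hs
  intro n hn hNn
  set N := (n : ℝ) with hNdef
  have hN1 : (1:ℝ) ≤ N := by rw [hNdef]; exact_mod_cast hn
  have hN0 : (0:ℝ) < N := by linarith
  have hNa : (0:ℝ) < N + a := by linarith
  have hNb : (0:ℝ) < N + b := by linarith
  have hNp : (0:ℝ) < N + 1 := by linarith
  have hα1 : (0:ℝ) < α - 1 := by linarith
  set A := Real.sqrt (α - 1) with hAdef
  have hA0 : 0 < A := Real.sqrt_pos.mpr hα1
  have hA2 : A ^ 2 = α - 1 := Real.sq_sqrt hα1.le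
  set M : ℝ := (α - 1) * (s ^ 2 * L ^ 2 + 1) + 2 * μ * L * A + (μ / s) ^ 2 with hMdef
  have hkey : M < N + a ∧ N + a < (N + b) ^ 2 := by
    rcases le_or_gt (b - a) (1/4) with hcase | hcase
    · have hN' := hN'₂ hcase
      set D := Real.sqrt (4 * (a - b) + 1) with hDdef
      have hD0 : 0 ≤ D := Real.sqrt_nonneg _
      have hD2 : D ^ 2 = 4 * (a - b) + 1 := Real.sq_sqrt (by linarith)
      rw [hN'] at hNn
      obtain ⟨h1, h2⟩ := max_lt_iff.mp hNn
      refine ⟨by linarith, ?_⟩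
      nlinarith [hD2, hD0, h1]
    · have hN' := hN'₁ hcase
      rw [hN'] at hNn
      refine ⟨by linarith, ?_⟩
      nlinarith [sq_nonneg (N + b - 1/2)]
  obtain ⟨hM1, hM2⟩ := hkey
  set r := Real.sqrt (N + a) with hrdef
  have hr0 : 0 < r := Real.sqrt_pos.mpr hNa
  have hr2 : r ^ 2 = N + a := Real.sq_sqrt hNa.le
  have hrb : r ≤ N + b := by
    have h := Real.sqrt_le_sqrt hM2.le
    rwa [Real.sqrt_sq hNb.le, ← hrdef] at h
  set G := Real.sqrt ((α - 1) / (N + a)) with hGdef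
  have hG0 : 0 ≤ G := Real.sqrt_nonneg _
  have hG2 : G ^ 2 = (α - 1) / (N + a) := Real.sq_sqrt (by positivity)
  have hGr : G = A / r := by rw [hGdef, hAdef, hrdef, Real.sqrt_div hα1.le]
  have key : ((N+1)/N) * (s*N/(N+1) + μ*N/((N+1)*(N+b))) = s + μ/(N+b) := by
    field_simp
  rw [key]
  have h2 : G / (N+b) ≤ A / (N+a) := by
    rw [hGr, div_div, show N + a = r * r by rw [← hr2]; ring]
    gcongr
  have h3 : (μ/(N+b))^2 ≤ μ^2/(N+a) := by
    rw [div_pow]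
    gcongr
  have expand : (s*(1 - s*G*L) - (s + μ/(N+b)))^2
      = s^4*L^2*G^2 + 2*s^2*L*μ*(G/(N+b)) + (μ/(N+b))^2 := by ring
  have e1 : s^4*L^2*G^2 + s^2*G^2 = s^2*(s^2*L^2+1)*(α-1)/(N+a) := by
    rw [hG2]; field_simp
  have e2 : 2*s^2*L*μ*(G/(N+b)) ≤ 2*s^2*L*μ*(A/(N+a)) := by
    apply mul_le_mul_of_nonneg_left h2 (by positivity)
  have hfin : s^2*(s^2*L^2+1)*(α-1)/(N+a) + 2*s^2*L*μ*(A/(N+a)) + μ^2/(N+a)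
      = s^2 * (M / (N+a)) := by
    rw [hMdef]; field_simp
  have hfin2 : s^2 * (M/(N+a)) < s^2 := by
    have h := (div_lt_one hNa).mpr hM1
    calc s^2 * (M/(N+a)) < s^2 * 1 := by
          exact mul_lt_mul_of_pos_left h (by positivity)
      _ = s^2 := by ring
  have hsq : (s*G)^2 = s^2*G^2 := by ring
  linarith [expand, e1, e2, h3, hfin, hfin2, hsq]
end

section
/- Let s > 0, 0 < β < 2√s, b > 0, μ ≥ 0. Define Δ := (2b√s − β(b+1) − μ/√s)² + 4(2√s − β)(βb + μ/√s) (which is nonnegative) and N′ := ( [β(b+1) + μ/√s − 2√s·b] + √Δ ) / (2(2√s − β)). Then for every natural number n ≥ 1 with n > N′, the coefficient λ_{n+1} := β√s + μ/(n+b) satisfies the strict inequality [s − ((n+1)/n)·λ_{n+1}]² < s². -/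
set_option maxHeartbeats 800000


/-- the coefficients of Example 25 satisfy assumption (i) of the
convergence theorem for LT-S-IGAHD for every `n > N′` (and the discriminant `Δ`
is nonnegative). -/
theorem example25_assumption_i
    (s β b μ : ℝ) (hs : 0 < s) (hβ₀ : 0 < β) (hβ : β < 2 * Real.sqrt s)
    (hb : 0 < b) (hμ : 0 ≤ μ)
    (Δ N' : ℝ)
    (hΔ : Δ = (2 * b * Real.sqrt s - β * (b + 1) - μ / Real.sqrt s) ^ 2
      + 4 * (2 * Real.sqrt s - β) * (β * b + μ / Real.sqrt s))
    (hN' : N' = ((β * (b + 1) + μ / Real.sqrt s - 2 * Real.sqrt s * b)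
      + Real.sqrt Δ) / (2 * (2 * Real.sqrt s - β))) :
    0 ≤ Δ ∧
    ∀ n : ℕ, 1 ≤ n → N' < (n : ℝ) →
      (s - (((n : ℝ) + 1) / (n : ℝ)) * (β * Real.sqrt s + μ / ((n : ℝ) + b))) ^ 2
        < s ^ 2 := by
  have hr : 0 < Real.sqrt s := Real.sqrt_pos.mpr hs
  set r := Real.sqrt s with hrdef
  have hrs : r ^ 2 = s := Real.sq_sqrt hs.le
  set a := μ / r with hadef
  have ha : a * r = μ := div_mul_cancel₀ μ hr.ne'
  have ha0 : 0 ≤ a := div_nonneg hμ hr.le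
  have hA : 0 < 2 * r - β := by linarith
  have hC : 0 ≤ β * b + a := by nlinarith [mul_nonneg hβ₀.le hb.le]
  have hΔ0 : 0 ≤ Δ := by
    rw [hΔ]
    nlinarith [sq_nonneg (2 * b * r - β * (b + 1) - a), mul_nonneg hA.le hC]
  refine ⟨hΔ0, ?_⟩
  intro n hn1 hnN
  set x := (n : ℝ) with hxdef
  have hx1 : (1 : ℝ) ≤ x := by rw [hxdef]; exact_mod_cast hn1
  have hx0 : (0 : ℝ) < x := by linarith
  have hxb : (0 : ℝ) < x + b := by linarith
  have hsqΔ : Real.sqrt Δ ^ 2 = Δ := Real.sq_sqrt hΔ0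
  have hsΔ0 : 0 ≤ Real.sqrt Δ := Real.sqrt_nonneg Δ
  -- linear bound from n > N'
  have hlin : (β * (b + 1) + a - 2 * r * b) + Real.sqrt Δ
      < x * (2 * (2 * r - β)) := by
    rw [hN', div_lt_iff₀ (by linarith : 0 < 2 * (2 * r - β))] at hnN
    linarith
  -- quadratic positivity
  have hpos : (2 * r - β) * x ^ 2 + (2 * r * b - β * (b + 1) - a) * x
      - (β * b + a) > 0 := by
    have hv : Real.sqrt Δ < 2 * (2 * r - β) * x + (2 * r * b - β * (b + 1) - a) := by
      linarith
    have hv2 : Δ < (2 * (2 * r - β) * x + (2 * r * b - β * (b + 1) - a)) ^ 2 := by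
      nlinarith
    rw [hΔ] at hv2
    nlinarith [hv2, hA, mul_pos hA hx0]
  have hμb : μ / (x + b) * (x + b) = μ := div_mul_cancel₀ μ hxb.ne'
  have e1 : a * r * (x + 1) = μ * (x + 1) := by rw [ha]
  have e2 : μ / (x + b) * (x + b) * (x + 1) = μ * (x + 1) := by rw [hμb]
  have ht0 : 0 < ((x + 1) / x) * (β * r + μ / (x + b)) := by
    have h1 : 0 < β * r + μ / (x + b) := by
      linarith [mul_pos hβ₀ hr, div_nonneg hμ hxb.le]
    exact mul_pos (div_pos (by linarith) hx0) h1
  have ht2 : ((x + 1) / x) * (β * r + μ / (x + b)) < 2 * s := by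
    rw [div_mul_eq_mul_div, div_lt_iff₀ hx0]
    have hkey : (x + 1) * (x + b) * (β * r + μ / (x + b)) < 2 * r ^ 2 * x * (x + b) := by
      nlinarith [mul_pos hr hpos, e1, e2]
    rw [← hrs]
    nlinarith [hkey, hxb]
  exact sq_lt_sq' (by linarith : -s < s - ((x + 1) / x) * (β * r + μ / (x + b)))
    (by linarith : s - ((x + 1) / x) * (β * r + μ / (x + b)) < s)
end

section
/- Let L > 0, s ∈ (0, 1/L], and a, b, μ ≥ 0. Define N′ := √(3 + (μ/s)²) − a if a ≤ b, and N′ := √(3 + (μ/s)²) − b if b ≤ a. Then for every natural number n ≥ 1 with n > N′, the coefficients γ_n := −s/(n+a) and λ_{n+1} := s·n/(n+1) + μ·n/((n+1)(n+b)) satisfy the strict inequality [s(1 − γ_n L) − ((n+1)/n)·λ_{n+1}]² < s² − γ_n². -/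
lemma aux26 (s L μ A B C : ℝ) (hs : 0 < s) (hL : 0 < L) (hsL : s * L ≤ 1)
    (hμ : 0 ≤ μ) (hC : 0 < C) (hCA : C ≤ A) (hCB : C ≤ B)
    (hK : 2 * s ^ 2 + μ ^ 2 < s ^ 2 * C ^ 2) :
    (s ^ 2 * L / A - μ / B) ^ 2 < s ^ 2 - (s / A) ^ 2 := by
  have hA : 0 < A := lt_of_lt_of_le hC hCA
  have hB : 0 < B := lt_of_lt_of_le hC hCB
  have ht : 0 < s ^ 2 * L := by positivity
  have hts : s ^ 2 * L ≤ s := by nlinarith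
  have h1 : (s ^ 2 * L * B - μ * A) ^ 2 ≤ (s ^ 2 * L) ^ 2 * B ^ 2 + μ ^ 2 * A ^ 2 := by
    nlinarith [mul_nonneg (mul_nonneg ht.le hB.le) (mul_nonneg hμ hA.le)]
  have h2 : (s ^ 2 * L) ^ 2 ≤ s ^ 2 := by nlinarith
  have e1 : 2 * s ^ 2 * B ^ 2 * C ^ 2 ≤ 2 * s ^ 2 * B ^ 2 * A ^ 2 := by
    nlinarith [mul_le_mul_of_nonneg_left (by nlinarith : C ^ 2 ≤ A ^ 2)
      (by positivity : (0:ℝ) ≤ 2 * s ^ 2 * B ^ 2)]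
  have e2 : μ ^ 2 * A ^ 2 * C ^ 2 ≤ μ ^ 2 * A ^ 2 * B ^ 2 := by
    nlinarith [mul_le_mul_of_nonneg_left (by nlinarith : C ^ 2 ≤ B ^ 2)
      (by positivity : (0:ℝ) ≤ μ ^ 2 * A ^ 2)]
  have e3 : (2 * s ^ 2 + μ ^ 2) * (A ^ 2 * B ^ 2) < s ^ 2 * C ^ 2 * (A ^ 2 * B ^ 2) :=
    mul_lt_mul_of_pos_right hK (by positivity)
  have e4 : C ^ 2 * (2 * s ^ 2 * B ^ 2 + μ ^ 2 * A ^ 2) < C ^ 2 * (s ^ 2 * A ^ 2 * B ^ 2) := by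
    nlinarith [e1, e2, e3]
  have e5 : 2 * s ^ 2 * B ^ 2 + μ ^ 2 * A ^ 2 < s ^ 2 * A ^ 2 * B ^ 2 :=
    lt_of_mul_lt_mul_left e4 (sq_nonneg C)
  have hP : (s ^ 2 * L * B - μ * A) ^ 2 + s ^ 2 * B ^ 2 < s ^ 2 * A ^ 2 * B ^ 2 := by
    nlinarith [h1, h2, e5, sq_nonneg B]
  have heq : s ^ 2 - (s / A) ^ 2 - (s ^ 2 * L / A - μ / B) ^ 2
      = (s ^ 2 * A ^ 2 * B ^ 2 - s ^ 2 * B ^ 2 - (s ^ 2 * L * B - μ * A) ^ 2) / (A ^ 2 * B ^ 2) := by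
    field_simp
  have hpos : 0 < s ^ 2 - (s / A) ^ 2 - (s ^ 2 * L / A - μ / B) ^ 2 := by
    rw [heq]
    exact div_pos (by linarith) (by positivity)
  linarith

/-- the coefficients of Example 26 satisfy assumption (i) of the
convergence theorem for LT-S-IGAHD for every `n > N′`. -/
theorem example26_assumption_i
    (L s a b μ : ℝ) (hL : 0 < L) (hs : s ∈ Set.Ioc (0 : ℝ) (1 / L))
    (ha : 0 ≤ a) (hb : 0 ≤ b) (hμ : 0 ≤ μ)
    (N' : ℝ)
    (hN'₁ : a ≤ b → N' = Real.sqrt (3 + (μ / s) ^ 2) - a)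
    (hN'₂ : b ≤ a → N' = Real.sqrt (3 + (μ / s) ^ 2) - b) :
    ∀ n : ℕ, 1 ≤ n → N' < (n : ℝ) →
      (s * (1 - (-(s / ((n : ℝ) + a))) * L)
        - (((n : ℝ) + 1) / (n : ℝ))
          * (s * (n : ℝ) / ((n : ℝ) + 1)
            + μ * (n : ℝ) / (((n : ℝ) + 1) * ((n : ℝ) + b)))) ^ 2
      < s ^ 2 - (-(s / ((n : ℝ) + a))) ^ 2 := by
  obtain ⟨hs0, hsL'⟩ := hs
  have hsL : s * L ≤ 1 := by
    rw [le_div_iff₀ hL] at hsL'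
    linarith
  intro n hn hNn
  have hN1 : (1:ℝ) ≤ (n:ℝ) := by exact_mod_cast hn
  have hN0 : (0:ℝ) < (n:ℝ) := by linarith
  have hNa : (0:ℝ) < (n:ℝ) + a := by linarith
  have hNb : (0:ℝ) < (n:ℝ) + b := by linarith
  have heq : (s * (1 - (-(s / ((n : ℝ) + a))) * L)
        - (((n : ℝ) + 1) / (n : ℝ))
          * (s * (n : ℝ) / ((n : ℝ) + 1)
            + μ * (n : ℝ) / (((n : ℝ) + 1) * ((n : ℝ) + b))))
      = s ^ 2 * L / ((n:ℝ) + a) - μ / ((n:ℝ) + b) := by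
    field_simp
    ring
  rw [heq, neg_sq]
  have hKnn : (0:ℝ) ≤ 3 + (μ / s) ^ 2 := by positivity
  have hsq := Real.sq_sqrt hKnn
  have hμs : (μ / s) ^ 2 * s ^ 2 = μ ^ 2 := by field_simp
  rcases le_total a b with hab | hab
  · have hN' := hN'₁ hab
    rw [hN'] at hNn
    have hlt : Real.sqrt (3 + (μ / s) ^ 2) < (n:ℝ) + a := by linarith
    have h3 : 3 + (μ / s) ^ 2 < ((n:ℝ) + a) ^ 2 := by
      nlinarith [Real.sqrt_nonneg (3 + (μ / s) ^ 2)]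
    have hK : 2 * s ^ 2 + μ ^ 2 < s ^ 2 * ((n:ℝ) + a) ^ 2 := by
      have hm := mul_lt_mul_of_pos_left h3 (by positivity : (0:ℝ) < s ^ 2)
      have key : s ^ 2 * (3 + (μ / s) ^ 2) = 3 * s ^ 2 + μ ^ 2 := by
        field_simp
      have hs2 : (0:ℝ) < s ^ 2 := by positivity
      linarith
    exact aux26 s L μ ((n:ℝ) + a) ((n:ℝ) + b) ((n:ℝ) + a) hs0 hL hsL hμ hNa le_rfl
      (by linarith) hK
  · have hN' := hN'₂ hab
    rw [hN'] at hNn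
    have hlt : Real.sqrt (3 + (μ / s) ^ 2) < (n:ℝ) + b := by linarith
    have h3 : 3 + (μ / s) ^ 2 < ((n:ℝ) + b) ^ 2 := by
      nlinarith [Real.sqrt_nonneg (3 + (μ / s) ^ 2)]
    have hK : 2 * s ^ 2 + μ ^ 2 < s ^ 2 * ((n:ℝ) + b) ^ 2 := by
      have hm := mul_lt_mul_of_pos_left h3 (by positivity : (0:ℝ) < s ^ 2)
      have key : s ^ 2 * (3 + (μ / s) ^ 2) = 3 * s ^ 2 + μ ^ 2 := by
        field_simp
      have hs2 : (0:ℝ) < s ^ 2 := by positivity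
      linarith
    exact aux26 s L μ ((n:ℝ) + a) ((n:ℝ) + b) ((n:ℝ) + b) hs0 hL hsL hμ hNb
      (by linarith) le_rfl hK
end
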